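/- Let k ≥ 0 and p ≥ 1 be integers and C ≥ 1 a real number. Let 𝒯 be a finite set of pairwise distinct (k,p)-trees such that every T ∈ 𝒯 is C-nice, i.e., Tran(T) ≤ C^p. Then bell_k(p)^{1/p} ≥ (p / (e · C²)) · |𝒯|^{1/p}. -/

import Mathlib

/-- `Q` is a refinement of `P`: every part of `Q` is contained in some part of `P`. -/
def FPRefines {p : ℕ} (Q P : Finpartition (Finset.univ : Finset (Fin p))) : Prop :=
  ∀ a ∈ Q.parts, ∃ b ∈ P.parts, a ⊆ b

/-- `f = (T_1, …, T_k)` is a `k`-level (hierarchical) partition of `[p]`: each `T_{i+1}`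
is a refinement of `T_i`. -/
def IsKLevel {p : ℕ} (k : ℕ)
    (f : Fin k → Finpartition (Finset.univ : Finset (Fin p))) : Prop :=
  ∀ (i : ℕ) (h : i + 1 < k), FPRefines (f ⟨i + 1, h⟩) (f ⟨i, Nat.lt_of_succ_lt h⟩)

/-- The order-`k` Bell number `bell_k(p)`: the number of `k`-level hierarchical partitions
of `[p]` (so `bell_0(p) = 1`). -/
noncomputable def bellk (k p : ℕ) : ℕ :=
  Nat.card {f : Fin k → Finpartition (Finset.univ : Finset (Fin p)) // IsKLevel k f}

/-- A rooted plane tree: every node carries the (ordered, finite) list of its children. -/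
inductive PTree : Type where
  | node : List PTree → PTree

mutual
/-- The number of leaves of a rooted plane tree (a node with no children is a leaf). -/
def PTree.numLeaves : PTree → ℕ
  | .node [] => 1
  | .node (t :: ts) => PTree.numLeavesList (t :: ts)

/-- The total number of leaves of the trees in a list. -/
def PTree.numLeavesList : List PTree → ℕ
  | [] => 0
  | t :: ts => t.numLeaves + PTree.numLeavesList ts
end

mutual
/-- `Tran(T) = ∏_{u a node of T} (number of children of u)!`. -/
def PTree.tran : PTree → ℕ
  | .node ts => ts.length.factorial * PTree.tranList ts

/-- The product of `Tran` over a list of trees. -/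
def PTree.tranList : List PTree → ℕ
  | [] => 1
  | t :: ts => t.tran * PTree.tranList ts
end

/-- `UniformDepth d T` holds iff every root-to-leaf path of `T` has exactly `d` edges. -/
inductive PTree.UniformDepth : ℕ → PTree → Prop where
  | leaf : PTree.UniformDepth 0 (.node [])
  | node (ts : List PTree) (d : ℕ) (hne : ts ≠ []) (h : ∀ t ∈ ts, PTree.UniformDepth d t) :
      PTree.UniformDepth (d + 1) (.node ts)

/-!
Label the leaves of every `T ∈ 𝒯` by `[p]` in all `p!` ways. Grouping the leaves of a labelled
tree by their ancestors at depths `1, …, k` gives a `k`-level partition of `[p]`, and the labelled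
tree is determined by this partition up to reordering the children of its nodes; so every
partition arises from at most `max Tran(T) ≤ C^p` labelled trees. Hence
`|𝒯| · p! ≤ bell_k(p) · C^p`, and `p! ≥ (p/e)^p` gives the bound after taking `p`-th roots.
-/

section Counting

variable {α β : Type*} [Inhabited α] (R : β → α → Prop) (n : β → ℕ)

theorem Finset.card_le_prod_of_forall₂ (bs : List β) (s : Finset (List α))
    (hn : ∀ b ∈ bs, ∀ u : Finset α, (∀ a ∈ u, R b a) → u.card ≤ n b)
    (hs : ∀ as ∈ s, List.Forall₂ R bs as) : s.card ≤ (bs.map n).prod := by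
  classical
  induction bs generalizing s with
  | nil =>
    have hsub : s ⊆ {[]} := fun as has => by simpa using hs as has
    simpa using Finset.card_le_card hsub
  | cons b bs ih =>
    have hcons : ∀ as ∈ s,
        R b as.headI ∧ List.Forall₂ R bs as.tail ∧ as = as.headI :: as.tail := by
      intro as has
      obtain ⟨a, as', hab, hbs, rfl⟩ := List.forall₂_cons_left_iff.mp (hs as has)
      exact ⟨hab, hbs, rfl⟩
    calc s.card ≤ (s.image List.headI ×ˢ s.image List.tail).card := by
          refine Finset.card_le_card_of_injOn (fun as => (as.headI, as.tail))
            (fun as has => Finset.mem_product.mpr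
              ⟨Finset.mem_image_of_mem _ has, Finset.mem_image_of_mem _ has⟩) ?_
          intro as has as' has' h
          simp only [Prod.mk.injEq] at h
          rw [(hcons as has).2.2, (hcons as' has').2.2, h.1, h.2]
      _ = (s.image List.headI).card * (s.image List.tail).card := Finset.card_product _ _
      _ ≤ n b * (bs.map n).prod := by
          gcongr
          · refine hn b List.mem_cons_self _ fun a ha => ?_
            obtain ⟨as, has, rfl⟩ := Finset.mem_image.mp ha
            exact (hcons as has).1
          · refine ih _ (fun b' hb' => hn b' (List.mem_cons_of_mem b hb')) fun as' has' => ?_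
            obtain ⟨as, has, rfl⟩ := Finset.mem_image.mp has'
            exact (hcons as has).2.1
      _ = ((b :: bs).map n).prod := by simp

theorem Finset.card_le_factorial_mul_prod_of_perm_forall₂ (bs : List β) (s : Finset (List α))
    (hn : ∀ b ∈ bs, ∀ u : Finset α, (∀ a ∈ u, R b a) → u.card ≤ n b)
    (hs : ∀ as ∈ s, ∃ bs', bs'.Perm bs ∧ List.Forall₂ R bs' as) :
    s.card ≤ bs.length.factorial * (bs.map n).prod := by
  classical
  have hsub : s ⊆ bs.permutations.toFinset.biUnion fun bs' => s.filter (List.Forall₂ R bs') := by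
    intro as has
    obtain ⟨bs', hperm, hR⟩ := hs as has
    simpa [hperm] using ⟨bs', hperm, has, hR⟩
  calc s.card ≤ ∑ bs' ∈ bs.permutations.toFinset, (s.filter (List.Forall₂ R bs')).card :=
        (Finset.card_le_card hsub).trans Finset.card_biUnion_le
    _ ≤ ∑ _bs' ∈ bs.permutations.toFinset, (bs.map n).prod := by
        refine Finset.sum_le_sum fun bs' hbs' => ?_
        have hperm : bs'.Perm bs := List.mem_permutations.mp (List.mem_toFinset.mp hbs')
        rw [← (hperm.map n).prod_eq]
        exact Finset.card_le_prod_of_forall₂ R n bs' _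
          (fun b hb => hn b (hperm.subset hb)) fun as has => (Finset.mem_filter.mp has).2
    _ ≤ bs.length.factorial * (bs.map n).prod := by
        rw [Finset.sum_const, smul_eq_mul, ← List.length_permutations]
        gcongr
        exact List.toFinset_card_le _

end Counting

namespace PTree

instance : Inhabited PTree := ⟨.node []⟩

theorem numLeaves_pos : ∀ T : PTree, 0 < T.numLeaves
  | .node [] => Nat.one_pos
  | .node (t :: ts) => by
      have := numLeaves_pos t
      simp only [numLeaves, numLeavesList]
      omega

theorem numLeaves_node {ts : List PTree} (hne : ts ≠ []) :
    (node ts).numLeaves = numLeavesList ts := by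
  cases ts with
  | nil => exact absurd rfl hne
  | cons t ts => rfl

theorem tranList_eq_prod (ts : List PTree) : tranList ts = (ts.map tran).prod := by
  induction ts with
  | nil => rfl
  | cons t ts ih => simp [tranList, ih]

theorem eq_node_nil_of_uniformDepth_zero {T : PTree} (h : T.UniformDepth 0) : T = node [] := by
  cases h; rfl

theorem exists_eq_node_of_uniformDepth_succ {T : PTree} {d : ℕ} (h : T.UniformDepth (d + 1)) :
    ∃ ts, T = node ts ∧ ts ≠ [] ∧ ∀ t ∈ ts, t.UniformDepth d := by
  cases h with
  | node ts d hne h => exact ⟨ts, rfl, hne, h⟩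

/-- The children of a node together with their leaf labels, when the leaves of the node are
labelled from left to right by `l`. -/
def labeledChildren : List PTree → List ℕ → List (PTree × List ℕ)
  | [], _ => []
  | t :: ts, l => (t, l.take t.numLeaves) :: labeledChildren ts (l.drop t.numLeaves)

section labeledChildren

variable {ts : List PTree} {l : List ℕ} {c : PTree × List ℕ}

@[simp] theorem map_fst_labeledChildren (ts : List PTree) (l : List ℕ) :
    (labeledChildren ts l).map Prod.fst = ts := by
  induction ts generalizing l with
  | nil => rfl
  | cons t ts ih => simp [labeledChildren, ih]

@[simp] theorem length_labeledChildren (ts : List PTree) (l : List ℕ) :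
    (labeledChildren ts l).length = ts.length := by
  rw [← List.length_map (f := Prod.fst), map_fst_labeledChildren]

theorem flatten_map_snd_labeledChildren (hlen : l.length = numLeavesList ts) :
    ((labeledChildren ts l).map Prod.snd).flatten = l := by
  induction ts generalizing l with
  | nil => simp_all [labeledChildren, numLeavesList]
  | cons t ts ih =>
    simp only [numLeavesList] at hlen
    simp [labeledChildren, ih (l := l.drop t.numLeaves) (by simp [hlen])]

theorem sublist_of_mem_labeledChildren (hc : c ∈ labeledChildren ts l) : c.2.Sublist l := by
  induction ts generalizing l with
  | nil => simp [labeledChildren] at hc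
  | cons t ts ih =>
    simp only [labeledChildren, List.mem_cons] at hc
    rcases hc with rfl | hc
    · exact List.take_sublist _ _
    · exact (ih hc).trans (List.drop_sublist _ _)

theorem length_of_mem_labeledChildren (hlen : l.length = numLeavesList ts)
    (hc : c ∈ labeledChildren ts l) : c.2.length = c.1.numLeaves := by
  induction ts generalizing l with
  | nil => simp [labeledChildren] at hc
  | cons t ts ih =>
    simp only [numLeavesList] at hlen
    simp only [labeledChildren, List.mem_cons] at hc
    rcases hc with rfl | hc
    · simp; omega
    · exact ih (by simp [hlen]) hc

theorem ne_nil_of_mem_labeledChildren (hlen : l.length = numLeavesList ts)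
    (hc : c ∈ labeledChildren ts l) : c.2 ≠ [] := by
  rw [← List.length_pos_iff, length_of_mem_labeledChildren hlen hc]
  exact numLeaves_pos _

theorem exists_mem_labeledChildren (hlen : l.length = numLeavesList ts) {a : ℕ} (ha : a ∈ l) :
    ∃ c ∈ labeledChildren ts l, a ∈ c.2 := by
  rw [← flatten_map_snd_labeledChildren hlen] at ha
  obtain ⟨_, hs, ha⟩ := List.mem_flatten.mp ha
  obtain ⟨c', hc', rfl⟩ := List.mem_map.mp hs
  exact ⟨c', hc', ha⟩

theorem pairwise_disjoint_labeledChildren (hl : l.Nodup) :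
    (labeledChildren ts l).Pairwise (fun c c' => c.2.Disjoint c'.2) := by
  induction ts generalizing l with
  | nil => simp [labeledChildren]
  | cons t ts ih =>
    simp only [labeledChildren, List.pairwise_cons]
    exact ⟨fun c hc _ ha hb =>
        List.disjoint_take_drop hl le_rfl ha ((sublist_of_mem_labeledChildren hc).subset hb),
      ih (hl.sublist (List.drop_sublist _ _))⟩

theorem nodup_map_toFinset_labeledChildren (hl : l.Nodup) (hlen : l.length = numLeavesList ts) :
    ((labeledChildren ts l).map fun c => c.2.toFinset).Nodup := by
  refine List.pairwise_map.mpr ((pairwise_disjoint_labeledChildren hl).imp_of_mem ?_)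
  intro c c' hc _ hdisj heq
  obtain ⟨a, ha⟩ := List.exists_mem_of_ne_nil _ (ne_nil_of_mem_labeledChildren hlen hc)
  exact hdisj ha (by simpa [heq] using (List.mem_toFinset.mpr ha : a ∈ c.2.toFinset))

end labeledChildren

mutual
/-- The address of the leaf labelled `a`, when the leaves of `T` are labelled from left to right
by `l`: the list of child indices along the path from the root to that leaf. -/
def address : PTree → List ℕ → ℕ → List ℕ
  | .node ts, l, a => addressList 0 ts l a

def addressList : ℕ → List PTree → List ℕ → ℕ → List ℕ
  | _, [], _, _ => []
  | i, t :: ts, l, a =>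
      if a ∈ l.take t.numLeaves then i :: address t (l.take t.numLeaves) a
      else addressList (i + 1) ts (l.drop t.numLeaves) a
end

theorem addressList_of_mem {ts : List PTree} {l : List ℕ} (hl : l.Nodup) {a i : ℕ}
    (hi : i < (labeledChildren ts l).length) (ha : a ∈ (labeledChildren ts l)[i].2) (i₀ : ℕ) :
    addressList i₀ ts l a =
      (i₀ + i) :: address (labeledChildren ts l)[i].1 (labeledChildren ts l)[i].2 a := by
  induction ts generalizing l i i₀ with
  | nil => simp [labeledChildren] at hi
  | cons t ts ih =>
    cases i with
    | zero =>
      simp only [labeledChildren, List.getElem_cons_zero] at ha ⊢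
      simp [addressList, ha]
    | succ i =>
      simp only [labeledChildren, List.getElem_cons_succ] at ha ⊢
      have hnot : a ∉ l.take t.numLeaves := fun h => List.disjoint_take_drop hl le_rfl h
        ((sublist_of_mem_labeledChildren (List.getElem_mem _)).subset ha)
      rw [addressList, if_neg hnot, ih (hl.sublist (List.drop_sublist _ _)) _ ha]
      congr 1
      omega

theorem address_node_of_mem {ts : List PTree} {l : List ℕ} (hl : l.Nodup) {a i : ℕ}
    (hi : i < (labeledChildren ts l).length) (ha : a ∈ (labeledChildren ts l)[i].2) :
    address (node ts) l a =
      i :: address (labeledChildren ts l)[i].1 (labeledChildren ts l)[i].2 a := by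
  rw [address, addressList_of_mem hl hi ha, zero_add]

theorem length_address {d : ℕ} {T : PTree} (hT : T.UniformDepth d) {l : List ℕ} (hl : l.Nodup)
    (hlen : l.length = T.numLeaves) {a : ℕ} (ha : a ∈ l) : (address T l a).length = d := by
  induction hT generalizing l with
  | leaf => simp [address, addressList]
  | node ts d hne hts ih =>
    rw [numLeaves_node hne] at hlen
    obtain ⟨c, hc, hac⟩ := exists_mem_labeledChildren hlen ha
    obtain ⟨i, hi, rfl⟩ := List.mem_iff_getElem.mp hc
    rw [address_node_of_mem hl hi hac, List.length_cons,
      ih _ (by simpa using List.mem_map_of_mem (f := Prod.fst) hc)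
        (hl.sublist (sublist_of_mem_labeledChildren hc)) (length_of_mem_labeledChildren hlen hc)
        hac]

theorem address_injOn {d : ℕ} {T : PTree} (hT : T.UniformDepth d) {l : List ℕ} (hl : l.Nodup)
    (hlen : l.length = T.numLeaves) {a b : ℕ} (ha : a ∈ l) (hb : b ∈ l)
    (hab : address T l a = address T l b) : a = b := by
  induction hT generalizing l with
  | leaf =>
    obtain ⟨x, rfl⟩ := List.length_eq_one_iff.mp hlen
    simp_all
  | node ts d hne hts ih =>
    rw [numLeaves_node hne] at hlen
    obtain ⟨c, hc, hac⟩ := exists_mem_labeledChildren hlen ha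
    obtain ⟨c', hc', hbc'⟩ := exists_mem_labeledChildren hlen hb
    obtain ⟨i, hi, rfl⟩ := List.mem_iff_getElem.mp hc
    obtain ⟨i', hi', rfl⟩ := List.mem_iff_getElem.mp hc'
    rw [address_node_of_mem hl hi hac, address_node_of_mem hl hi' hbc'] at hab
    obtain ⟨rfl, hab⟩ := List.cons.inj hab
    exact ih _ (by simpa using List.mem_map_of_mem (f := Prod.fst) hc)
      (hl.sublist (sublist_of_mem_labeledChildren hc)) (length_of_mem_labeledChildren hlen hc)
      hac hbc' hab

/-- The leaves labelled `a` and `b` of the labelled tree `x` have a common ancestor at depth `j`. -/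
def SameBlock (x : PTree × List ℕ) (j a b : ℕ) : Prop :=
  (address x.1 x.2 a).take j = (address x.1 x.2 b).take j

theorem SameBlock.of_le {x : PTree × List ℕ} {i j a b : ℕ} (hij : i ≤ j) (h : SameBlock x j a b) :
    SameBlock x i a b := by
  rw [SameBlock, ← min_eq_left hij, ← List.take_take, h, List.take_take]

theorem sameBlock_succ_iff {ts : List PTree} {l : List ℕ} (hl : l.Nodup)
    {c : PTree × List ℕ} (hc : c ∈ labeledChildren ts l) {a b : ℕ} (ha : a ∈ c.2) (hb : b ∈ c.2)
    (j : ℕ) : SameBlock (node ts, l) (j + 1) a b ↔ SameBlock c j a b := by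
  obtain ⟨i, hi, rfl⟩ := List.mem_iff_getElem.mp hc
  simp [SameBlock, address_node_of_mem hl hi ha, address_node_of_mem hl hi hb]

theorem mem_iff_sameBlock_one {ts : List PTree} {l : List ℕ} (hl : l.Nodup)
    (hlen : l.length = numLeavesList ts) {c : PTree × List ℕ} (hc : c ∈ labeledChildren ts l)
    {a : ℕ} (ha : a ∈ c.2) (b : ℕ) : b ∈ c.2 ↔ b ∈ l ∧ SameBlock (node ts, l) 1 a b := by
  refine ⟨fun hb => ⟨(sublist_of_mem_labeledChildren hc).subset hb,
    (sameBlock_succ_iff hl hc ha hb 0).mpr rfl⟩, fun ⟨hbl, hab⟩ => ?_⟩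
  obtain ⟨c', hc', hbc'⟩ := exists_mem_labeledChildren hlen hbl
  obtain ⟨i, hi, rfl⟩ := List.mem_iff_getElem.mp hc
  obtain ⟨i', hi', rfl⟩ := List.mem_iff_getElem.mp hc'
  simp only [SameBlock, address_node_of_mem hl hi ha, address_node_of_mem hl hi' hbc',
    List.take_succ_cons, List.take_zero, List.cons.injEq, and_true] at hab
  subst hab
  exact hbc'

theorem sameBlock_iff_eq {d : ℕ} {x : PTree × List ℕ} (hx : x.1.UniformDepth d)
    (hl : x.2.Nodup) (hlen : x.2.length = x.1.numLeaves) {a b : ℕ} (ha : a ∈ x.2)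
    (hb : b ∈ x.2) : SameBlock x d a b ↔ a = b := by
  rw [SameBlock, List.take_of_length_le (length_address hx hl hlen ha).le,
    List.take_of_length_le (length_address hx hl hlen hb).le]
  exact ⟨address_injOn hx hl hlen ha hb, fun h => h ▸ rfl⟩

/-- `x` is a labelled tree of depth `d` on the labels of `x₀` whose leaves are grouped into the
same blocks as those of `x₀` at every depth, i.e. `x` is `x₀` with the children of some nodes
reordered. -/
structure SameHierarchy (d : ℕ) (x₀ x : PTree × List ℕ) : Prop where
  uniformDepth : x.1.UniformDepth d
  perm : x.2.Perm x₀.2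
  length_eq : x.2.length = x.1.numLeaves
  sameBlock_iff : ∀ j ≤ d, ∀ a ∈ x₀.2, ∀ b ∈ x₀.2, (SameBlock x j a b ↔ SameBlock x₀ j a b)

theorem exists_toFinset_eq_of_sameBlock_one_iff {ts ts' : List PTree} {l l' : List ℕ}
    (hl : l.Nodup) (hlen : l.length = numLeavesList ts)
    (hl' : l'.Nodup) (hlen' : l'.length = numLeavesList ts') (hmem : ∀ a, a ∈ l ↔ a ∈ l')
    (hrel : ∀ a ∈ l, ∀ b ∈ l, SameBlock (node ts, l) 1 a b ↔ SameBlock (node ts', l') 1 a b)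
    {c : PTree × List ℕ} (hc : c ∈ labeledChildren ts l) :
    ∃ c' ∈ labeledChildren ts' l', c'.2.toFinset = c.2.toFinset := by
  obtain ⟨a, ha⟩ := List.exists_mem_of_ne_nil _ (ne_nil_of_mem_labeledChildren hlen hc)
  have hal : a ∈ l := (sublist_of_mem_labeledChildren hc).subset ha
  obtain ⟨c', hc', ha'⟩ := exists_mem_labeledChildren hlen' ((hmem a).mp hal)
  refine ⟨c', hc', Finset.ext fun b => ?_⟩
  simp only [List.mem_toFinset, mem_iff_sameBlock_one hl hlen hc ha,
    mem_iff_sameBlock_one hl' hlen' hc' ha', ← hmem]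
  exact ⟨fun ⟨hb, hab⟩ => ⟨hb, (hrel a hal b hb).mpr hab⟩,
    fun ⟨hb, hab⟩ => ⟨hb, (hrel a hal b hb).mp hab⟩⟩

section SameHierarchy

variable {d : ℕ} {ts₀ ts : List PTree} {l₀ l : List ℕ}

theorem SameHierarchy.ne_nil (h : SameHierarchy (d + 1) (node ts₀, l₀) (node ts, l)) :
    ts ≠ [] := by
  obtain ⟨_, ⟨⟩, hne, -⟩ := exists_eq_node_of_uniformDepth_succ h.uniformDepth
  exact hne

theorem SameHierarchy.length_eq_numLeavesList
    (h : SameHierarchy (d + 1) (node ts₀, l₀) (node ts, l)) : l.length = numLeavesList ts :=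
  h.length_eq.trans (numLeaves_node h.ne_nil)

theorem SameHierarchy.perm_map_toFinset (h : SameHierarchy (d + 1) (node ts₀, l₀) (node ts, l))
    (hl₀ : l₀.Nodup) (hlen₀ : l₀.length = numLeavesList ts₀) :
    ((labeledChildren ts l).map fun c => c.2.toFinset).Perm
      ((labeledChildren ts₀ l₀).map fun c => c.2.toFinset) := by
  have hl : l.Nodup := h.perm.nodup_iff.mpr hl₀
  have hlen := h.length_eq_numLeavesList
  have hmem : ∀ a, a ∈ l ↔ a ∈ l₀ := fun a => h.perm.mem_iff
  have hrel : ∀ a ∈ l₀, ∀ b ∈ l₀, SameBlock (node ts, l) 1 a b ↔ SameBlock (node ts₀, l₀) 1 a b :=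
    h.sameBlock_iff 1 (by omega)
  refine (List.perm_ext_iff_of_nodup (nodup_map_toFinset_labeledChildren hl hlen)
    (nodup_map_toFinset_labeledChildren hl₀ hlen₀)).mpr fun K => ?_
  simp only [List.mem_map]
  constructor
  · rintro ⟨c, hc, rfl⟩
    exact exists_toFinset_eq_of_sameBlock_one_iff hl hlen hl₀ hlen₀ hmem
      (fun a ha b hb => hrel a ((hmem a).mp ha) b ((hmem b).mp hb)) hc
  · rintro ⟨c, hc, rfl⟩
    exact exists_toFinset_eq_of_sameBlock_one_iff hl₀ hlen₀ hl hlen (fun a => (hmem a).symm)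
      (fun a ha b hb => (hrel a ha b hb).symm) hc

theorem SameHierarchy.of_mem_labeledChildren
    (h : SameHierarchy (d + 1) (node ts₀, l₀) (node ts, l)) (hl₀ : l₀.Nodup)
    {c₀ c : PTree × List ℕ} (hc₀ : c₀ ∈ labeledChildren ts₀ l₀) (hc : c ∈ labeledChildren ts l)
    (hcc : c.2.toFinset = c₀.2.toFinset) : SameHierarchy d c₀ c := by
  obtain ⟨_, ⟨⟩, -, hts⟩ := exists_eq_node_of_uniformDepth_succ h.uniformDepth
  have hl : l.Nodup := h.perm.nodup_iff.mpr hl₀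
  have hsub₀ := (sublist_of_mem_labeledChildren hc₀).subset
  have hcl : c.2.Nodup := hl.sublist (sublist_of_mem_labeledChildren hc)
  have hcl₀ : c₀.2.Nodup := hl₀.sublist (sublist_of_mem_labeledChildren hc₀)
  have hmem : ∀ a, a ∈ c.2 ↔ a ∈ c₀.2 := by simpa [Finset.ext_iff] using hcc
  refine ⟨hts _ (by simpa using List.mem_map_of_mem (f := Prod.fst) hc),
    (List.perm_ext_iff_of_nodup hcl hcl₀).mpr hmem,
    length_of_mem_labeledChildren h.length_eq_numLeavesList hc, ?_⟩
  intro j hj a ha b hb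
  rw [← sameBlock_succ_iff hl hc ((hmem a).mpr ha) ((hmem b).mpr hb),
    ← sameBlock_succ_iff hl₀ hc₀ ha hb]
  exact h.sameBlock_iff (j + 1) (by omega) a (hsub₀ ha) b (hsub₀ hb)

theorem SameHierarchy.exists_perm_forall₂
    (h : SameHierarchy (d + 1) (node ts₀, l₀) (node ts, l)) (hl₀ : l₀.Nodup)
    (hlen₀ : l₀.length = numLeavesList ts₀) :
    ∃ cs₀, cs₀.Perm (labeledChildren ts₀ l₀) ∧
      List.Forall₂ (SameHierarchy d) cs₀ (labeledChildren ts l) := by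
  have hkeys : List.Forall₂ (fun K c₀ => c₀ ∈ labeledChildren ts₀ l₀ ∧ K = c₀.2.toFinset)
      ((labeledChildren ts₀ l₀).map fun c => c.2.toFinset) (labeledChildren ts₀ l₀) := by
    simp
  obtain ⟨cs₀, hmatch, hperm⟩ := List.perm_comp_forall₂ (h.perm_map_toFinset hl₀ hlen₀) hkeys
  rw [List.forall₂_map_left_iff] at hmatch
  have hmatch' := (List.forall₂_and_left _ _).mpr ⟨fun c hc => hc, hmatch⟩
  exact ⟨cs₀, hperm, List.Forall₂.flip <| hmatch'.imp fun c c₀ ⟨hc, hc₀, hcc⟩ =>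
    h.of_mem_labeledChildren hl₀ hc₀ hc hcc⟩

end SameHierarchy

def children : PTree → List PTree
  | node ts => ts

theorem card_le_tran_of_sameHierarchy {d : ℕ} {x₀ : PTree × List ℕ} (hx₀ : x₀.1.UniformDepth d)
    (hl₀ : x₀.2.Nodup) (hlen₀ : x₀.2.length = x₀.1.numLeaves) (s : Finset (PTree × List ℕ))
    (hs : ∀ x ∈ s, SameHierarchy d x₀ x) : s.card ≤ x₀.1.tran := by
  classical
  obtain ⟨T₀, l₀⟩ := x₀
  dsimp only at hx₀ hl₀ hlen₀ hs ⊢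
  induction d generalizing T₀ l₀ s with
  | zero =>
    obtain rfl := eq_node_nil_of_uniformDepth_zero hx₀
    obtain ⟨a, rfl⟩ := List.length_eq_one_iff.mp hlen₀
    have hsub : s ⊆ {(node [], [a])} := fun x hx => by
      obtain ⟨hT, hperm, -, -⟩ := hs x hx
      simp [Prod.ext_iff, eq_node_nil_of_uniformDepth_zero hT, List.perm_singleton.mp hperm]
    simpa [tran, tranList] using Finset.card_le_card hsub
  | succ d ih =>
    obtain ⟨ts₀, rfl, hne₀, hts₀⟩ := exists_eq_node_of_uniformDepth_succ hx₀
    rw [numLeaves_node hne₀] at hlen₀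
    have hinj : Set.InjOn (fun x : PTree × List ℕ => labeledChildren x.1.children x.2) s := by
      rintro ⟨⟨ts⟩, l⟩ hx ⟨⟨ts'⟩, l'⟩ hy (hxy : labeledChildren ts l = labeledChildren ts' l')
      have hts : ts = ts' := by
        simpa using congrArg (List.map Prod.fst) hxy
      have hl : l = l' := by
        rw [← flatten_map_snd_labeledChildren (hs _ hx).length_eq_numLeavesList,
          ← flatten_map_snd_labeledChildren (hs _ hy).length_eq_numLeavesList, hxy]
      rw [hts, hl]
    have hchildren : ∀ c ∈ labeledChildren ts₀ l₀, ∀ u : Finset (PTree × List ℕ),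
        (∀ x ∈ u, SameHierarchy d c x) → u.card ≤ c.1.tran := fun c hc u =>
      ih u c.1 c.2 (hts₀ _ (by simpa using List.mem_map_of_mem (f := Prod.fst) hc))
        (hl₀.sublist (sublist_of_mem_labeledChildren hc))
        (length_of_mem_labeledChildren hlen₀ hc)
    have hmatch : ∀ cs ∈ s.image fun x : PTree × List ℕ => labeledChildren x.1.children x.2,
        ∃ cs₀, cs₀.Perm (labeledChildren ts₀ l₀) ∧ List.Forall₂ (SameHierarchy d) cs₀ cs := by
      simp only [Finset.mem_image]
      rintro _ ⟨⟨⟨ts⟩, l⟩, hx, rfl⟩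
      exact (hs _ hx).exists_perm_forall₂ hl₀ hlen₀
    calc s.card = (s.image fun x : PTree × List ℕ => labeledChildren x.1.children x.2).card :=
          (Finset.card_image_of_injOn hinj).symm
      _ ≤ (labeledChildren ts₀ l₀).length.factorial *
            ((labeledChildren ts₀ l₀).map fun c => c.1.tran).prod :=
          Finset.card_le_factorial_mul_prod_of_perm_forall₂ _ _ _ _ hchildren hmatch
      _ = (node ts₀).tran := by
          rw [show (fun c : PTree × List ℕ => c.1.tran) = tran ∘ Prod.fst from rfl,
            ← List.map_map, map_fst_labeledChildren, length_labeledChildren, tran,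
            tranList_eq_prod]

def blockSetoid (p : ℕ) (x : PTree × List ℕ) (j : ℕ) : Setoid (Fin p) where
  r a b := SameBlock x j a b
  iseqv := ⟨fun _ => rfl, Eq.symm, Eq.trans⟩

instance (p : ℕ) (x : PTree × List ℕ) (j : ℕ) : DecidableRel (blockSetoid p x j).r :=
  fun _ _ => inferInstanceAs (Decidable (_ = _))

/-- Level `i` groups the leaves of `x` (labelled by `Fin p`) by their ancestor at depth `i + 1`. -/
noncomputable def hierarchy (p k : ℕ) (x : PTree × List ℕ) :
    Fin k → Finpartition (Finset.univ : Finset (Fin p)) :=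
  fun i => Finpartition.ofSetoid (blockSetoid p x (i + 1))

theorem isKLevel_hierarchy (p k : ℕ) (x : PTree × List ℕ) : IsKLevel k (hierarchy p k x) := by
  intro i hi B hB
  obtain ⟨a, ha⟩ := Finpartition.nonempty_of_mem_parts _ hB
  refine ⟨(hierarchy p k x ⟨i, by omega⟩).part a,
    (Finpartition.part_mem _).mpr (Finset.mem_univ a), fun b hb => ?_⟩
  rw [← Finpartition.part_eq_of_mem _ hB ha] at hb
  exact Finpartition.mem_part_ofSetoid_iff_rel.mpr
    ((Finpartition.mem_part_ofSetoid_iff_rel.mp hb).of_le (Nat.le_succ _))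

theorem sameBlock_iff_of_hierarchy_eq {p k : ℕ} {x y : PTree × List ℕ}
    (h : hierarchy p k x = hierarchy p k y) (i : Fin k) (a b : Fin p) :
    SameBlock x (i + 1) a b ↔ SameBlock y (i + 1) a b := by
  change blockSetoid p x (i + 1) a b ↔ blockSetoid p y (i + 1) a b
  rw [← Finpartition.mem_part_ofSetoid_iff_rel, ← Finpartition.mem_part_ofSetoid_iff_rel]
  exact iff_of_eq (congrArg (fun P => b ∈ Finpartition.part P a) (congrFun h i))

theorem sameHierarchy_of_hierarchy_eq {p k : ℕ} {x₀ x : PTree × List ℕ}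
    (hx₀ : x₀.1.UniformDepth (k + 1)) (hl₀ : x₀.2.Perm (List.range p))
    (hlen₀ : x₀.2.length = x₀.1.numLeaves) (hx : x.1.UniformDepth (k + 1))
    (hl : x.2.Perm (List.range p)) (hlen : x.2.length = x.1.numLeaves)
    (h : hierarchy p k x = hierarchy p k x₀) : SameHierarchy (k + 1) x₀ x := by
  refine ⟨hx, hl.trans hl₀.symm, hlen, fun j hj a ha b hb => ?_⟩
  rcases Nat.lt_or_eq_of_le hj with hj | rfl
  · cases j with
    | zero => exact iff_of_true rfl rfl
    | succ i =>
      exact sameBlock_iff_of_hierarchy_eq h ⟨i, by omega⟩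
        ⟨a, List.mem_range.mp (hl₀.subset ha)⟩ ⟨b, List.mem_range.mp (hl₀.subset hb)⟩
  · have hmem : ∀ c, c ∈ x.2 ↔ c ∈ x₀.2 := fun c => (hl.trans hl₀.symm).mem_iff
    rw [sameBlock_iff_eq hx (hl.nodup_iff.mpr List.nodup_range) hlen ((hmem a).mpr ha)
        ((hmem b).mpr hb),
      sameBlock_iff_eq hx₀ (hl₀.nodup_iff.mpr List.nodup_range) hlen₀ ha hb]

end PTree

theorem card_le_bellk {k p : ℕ} (s : Finset (Fin k → Finpartition (Finset.univ : Finset (Fin p))))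
    (hs : ∀ P ∈ s, IsKLevel k P) : s.card ≤ bellk k p := by
  rw [← Nat.card_eq_finsetCard]
  exact Nat.card_le_card_of_injective (fun P => ⟨P.1, hs P.1 P.2⟩)
    fun P Q h => Subtype.ext (Subtype.mk.inj h)

open PTree in
theorem ncard_mul_factorial_le_bellk_mul (k p : ℕ) (𝒯 : Set PTree) (hfin : 𝒯.Finite)
    (htree : ∀ T ∈ 𝒯, T.UniformDepth (k + 1) ∧ T.numLeaves = p) (N : ℕ)
    (hN : ∀ T ∈ 𝒯, T.tran ≤ N) : 𝒯.ncard * p.factorial ≤ bellk k p * N := by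
  classical
  set S := hfin.toFinset ×ˢ (List.range p).permutations.toFinset
  have hS : ∀ x ∈ S, x.1.UniformDepth (k + 1) ∧ x.2.Perm (List.range p) ∧
      x.2.length = x.1.numLeaves ∧ x.1.tran ≤ N := by
    intro x hx
    simp only [S, Finset.mem_product, Set.Finite.mem_toFinset, List.mem_toFinset,
      List.mem_permutations] at hx
    obtain ⟨hT, hperm⟩ := hx
    exact ⟨(htree _ hT).1, hperm, by rw [hperm.length_eq, List.length_range, (htree _ hT).2],
      hN _ hT⟩
  have hcard : S.card = 𝒯.ncard * p.factorial := by
    rw [Finset.card_product, Set.ncard_eq_toFinset_card 𝒯 hfin,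
      List.toFinset_card_of_nodup (List.nodup_permutations _ List.nodup_range),
      List.length_permutations, List.length_range]
  have hfiber : ∀ P ∈ S.image (hierarchy p k),
      (S.filter fun x => hierarchy p k x = P).card ≤ N := by
    simp only [Finset.mem_image]
    rintro _ ⟨x₀, hx₀, rfl⟩
    obtain ⟨hT₀, hl₀, hlen₀, htran⟩ := hS x₀ hx₀
    refine (card_le_tran_of_sameHierarchy hT₀ (hl₀.nodup_iff.mpr List.nodup_range) hlen₀ _
      fun x hx => ?_).trans htran
    obtain ⟨hxS, hxP⟩ := Finset.mem_filter.mp hx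
    obtain ⟨hT, hl, hlen, -⟩ := hS x hxS
    exact sameHierarchy_of_hierarchy_eq hT₀ hl₀ hlen₀ hT hl hlen hxP
  have himage : (S.image (hierarchy p k)).card ≤ bellk k p := by
    refine card_le_bellk _ fun P hP => ?_
    obtain ⟨x, -, rfl⟩ := Finset.mem_image.mp hP
    exact isKLevel_hierarchy p k x
  calc 𝒯.ncard * p.factorial = S.card := hcard.symm
    _ ≤ N * (S.image (hierarchy p k)).card := Finset.card_le_mul_card_image S N hfiber
    _ ≤ bellk k p * N := by rw [mul_comm]; gcongr

theorem pow_div_exp_one_le_factorial (p : ℕ) : ((p : ℝ) / Real.exp 1) ^ p ≤ p.factorial := by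
  have h := Real.pow_div_factorial_le_exp (p : ℝ) (Nat.cast_nonneg p) p
  rw [div_le_iff₀ (by positivity), ← Real.exp_one_pow] at h
  rw [div_pow, div_le_iff₀ (by positivity)]
  linarith

theorem div_mul_rpow_le_of_mul_factorial_le {p : ℕ} (hp : 1 ≤ p) {C m b : ℝ} (hC : 1 ≤ C)
    (hm : 0 ≤ m) (h : m * p.factorial ≤ b * C ^ p) :
    p / (Real.exp 1 * C ^ 2) * m ^ (1 / (p : ℝ)) ≤ b ^ (1 / (p : ℝ)) := by
  have hC0 : 0 < C := by linarith
  have hkey : (p / (Real.exp 1 * C)) ^ p * m ≤ b := by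
    calc (p / (Real.exp 1 * C)) ^ p * m = ((p : ℝ) / Real.exp 1) ^ p * m / C ^ p := by
          rw [div_mul_eq_div_div, div_pow (_ / _)]; ring
      _ ≤ p.factorial * m / C ^ p := by gcongr; exact pow_div_exp_one_le_factorial p
      _ ≤ b := by rw [div_le_iff₀ (by positivity)]; linarith
  calc p / (Real.exp 1 * C ^ 2) * m ^ (1 / (p : ℝ))
      ≤ p / (Real.exp 1 * C) * m ^ (1 / (p : ℝ)) := by
        gcongr
        nlinarith
    _ = ((p / (Real.exp 1 * C)) ^ p * m) ^ (1 / (p : ℝ)) := by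
        rw [Real.mul_rpow (by positivity) hm, one_div,
          Real.pow_rpow_inv_natCast (by positivity) (by omega)]
    _ ≤ b ^ (1 / (p : ℝ)) := Real.rpow_le_rpow (by positivity) hkey (by positivity)

/-- Let `k ≥ 0`, `p ≥ 1` and `C ≥ 1`. If `𝒯` is a finite set of
pairwise distinct `(k,p)`-trees (rooted plane trees with exactly `p` leaves in which
every root-to-leaf path has exactly `k+1` edges), each of which is `C`-nice
(`Tran(T) ≤ C^p`), then `bell_k(p)^{1/p} ≥ (p / (e · C²)) · |𝒯|^{1/p}`. -/
theorem bellk_lower_bound_of_nice_trees (k p : ℕ) (hp : 1 ≤ p)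
    (C : ℝ) (hC : 1 ≤ C) (𝒯 : Set PTree) (hfin : 𝒯.Finite)
    (htree : ∀ T ∈ 𝒯, T.UniformDepth (k + 1) ∧ T.numLeaves = p)
    (hnice : ∀ T ∈ 𝒯, (T.tran : ℝ) ≤ C ^ p) :
    ((p : ℝ) / (Real.exp 1 * C ^ 2)) * (𝒯.ncard : ℝ) ^ (1 / (p : ℝ)) ≤
      (bellk k p : ℝ) ^ (1 / (p : ℝ)) := by
  have hcount := ncard_mul_factorial_le_bellk_mul k p 𝒯 hfin htree ⌊C ^ p⌋₊
    fun T hT => Nat.le_floor (hnice T hT)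
  refine div_mul_rpow_le_of_mul_factorial_le hp hC (Nat.cast_nonneg _) ?_
  calc (𝒯.ncard : ℝ) * p.factorial ≤ bellk k p * ⌊C ^ p⌋₊ := by exact_mod_cast hcount
    _ ≤ bellk k p * C ^ p := by gcongr; exact Nat.floor_le (by positivity)
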